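/- Let T be a tree on a finite nonempty vertex type V with n = |V| vertices, and let L be the line graph of T, the simple graph whose vertices are the edges of T, with two distinct edges adjacent iff they share an endpoint. Then the Wiener index of L satisfies W(L) = W(T) − n(n−1)/2, i.e., W(L) = W(T) − C(n,2). -/

import Mathlib

/-!
In a connected graph, two distinct edges `e ≠ f` are at distance `d(e, f) + 1` in the line
graph, where `d(e, f)` (`endpointDist`) is the least distance from an endpoint of `e` to an
endpoint of `f`. In a tree, `d(u, v)` is the number of edges whose removal separates `u` from
`v`, and likewise `d(e, f)` is the number of edges whose removal separates `e` from `f`.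
Removing an edge leaves two subtrees, with `a` and `b` vertices and hence `a - 1` and `b - 1`
edges, so that edge separates `2ab` ordered pairs of vertices but only `2(a - 1)(b - 1)` ordered
pairs of edges. The difference `2(a + b - 1) = 2(n - 1)`, summed over the `n - 1` edges,
together with the `+ 1` for each ordered pair of distinct edges, gives
`2 W(T) - 2 W(L(T)) = n (n - 1)`.
-/

/-- The Wiener index of a finite simple graph: half the sum of the graph
distances over all ordered pairs of vertices. -/
noncomputable def wienerIndex {V : Type*} [Fintype V] (G : SimpleGraph V) : ℚ :=
  (∑ u : V, ∑ v : V, (G.dist u v : ℚ)) / 2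

namespace Finset

theorem card_filter_mem_and_mem_or_mem_and_mem {α : Type*} [DecidableEq α]
    {s A B : Finset α} (hA : A ⊆ s) (hB : B ⊆ s) (hAB : Disjoint A B) :
    #{p ∈ s ×ˢ s | p.1 ∈ A ∧ p.2 ∈ B ∨ p.1 ∈ B ∧ p.2 ∈ A} = 2 * #A * #B := by
  have : {p ∈ s ×ˢ s | p.1 ∈ A ∧ p.2 ∈ B ∨ p.1 ∈ B ∧ p.2 ∈ A} = A ×ˢ B ∪ B ×ˢ A := by
    ext ⟨a, b⟩
    simp only [mem_filter, mem_product, mem_union]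
    refine ⟨And.right, fun h ↦ ⟨?_, h⟩⟩
    rcases h with ⟨ha, hb⟩ | ⟨ha, hb⟩
    exacts [⟨hA ha, hB hb⟩, ⟨hB ha, hA hb⟩]
  rw [this, card_union_of_disjoint (disjoint_product.mpr (.inl hAB)), card_product, card_product]
  ring

end Finset

theorem Sym2.forall_mem_forall_mem_or_iff {α : Type*} [DecidableEq α] {A B : Finset α}
    (hAB : Disjoint A B) {e f : Sym2 α} :
    (∀ a ∈ e, ∀ b ∈ f, a ∈ A ∧ b ∈ B ∨ a ∈ B ∧ b ∈ A) ↔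
      e.toFinset ⊆ A ∧ f.toFinset ⊆ B ∨ e.toFinset ⊆ B ∧ f.toFinset ⊆ A := by
  simp only [Finset.subset_iff, Sym2.mem_toFinset]
  have hAB' : ∀ a ∈ A, a ∉ B := fun _ ↦ (Finset.disjoint_left.mp hAB ·)
  refine ⟨fun h ↦ ?_, ?_⟩
  · rcases h _ e.out_fst_mem _ f.out_fst_mem with ⟨ha, hb⟩ | ⟨ha, hb⟩
    · exact .inl ⟨fun a h' ↦ ((h a h' _ f.out_fst_mem).resolve_right (hAB' _ ·.2 hb)).1,
        fun b h' ↦ ((h _ e.out_fst_mem b h').resolve_right (hAB' _ ha ·.1)).2⟩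
    · exact .inr ⟨fun a h' ↦ ((h a h' _ f.out_fst_mem).resolve_left (hAB' _ hb ·.2)).1,
        fun b h' ↦ ((h _ e.out_fst_mem b h').resolve_left (hAB' _ ·.1 ha)).2⟩
  · rintro (⟨he, hf⟩ | ⟨he, hf⟩) a ha b hb
    exacts [.inl ⟨he ha, hf hb⟩, .inr ⟨he ha, hf hb⟩]

namespace SimpleGraph

open Finset

variable {V : Type*} {G : SimpleGraph V} {u v a x y : V} {e f g : Sym2 V}

noncomputable def endpointDist (G : SimpleGraph V) (e f : Sym2 V) : ℕ :=
  sInf {k | ∃ u ∈ e, ∃ v ∈ f, G.dist u v = k}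

lemma exists_dist_eq_endpointDist (G : SimpleGraph V) (e f : Sym2 V) :
    ∃ u ∈ e, ∃ v ∈ f, G.dist u v = G.endpointDist e f :=
  Nat.sInf_mem (s := {k | ∃ u ∈ e, ∃ v ∈ f, G.dist u v = k})
    ⟨_, e.out.1, e.out_fst_mem, f.out.1, f.out_fst_mem, rfl⟩

lemma endpointDist_le_dist (hu : u ∈ e) (hv : v ∈ f) : G.endpointDist e f ≤ G.dist u v :=
  Nat.sInf_le ⟨u, hu, v, hv, rfl⟩

lemma endpointDist_self (e : Sym2 V) : G.endpointDist e e = 0 := by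
  simpa using endpointDist_le_dist (G := G) e.out_fst_mem e.out_fst_mem

lemma dist_le_one_of_mem_edgeSet (he : e ∈ G.edgeSet) (hu : u ∈ e) (hv : v ∈ e) :
    G.dist u v ≤ 1 := by
  obtain rfl | huv := eq_or_ne u v
  · simp
  · exact (dist_eq_one_iff_adj.mpr (adj_iff_exists_edge.mpr ⟨huv, e, he, hu, hv⟩)).le

lemma edist_lineGraph_le_one {e f : G.edgeSet} (he : u ∈ (e : Sym2 V))
    (hf : u ∈ (f : Sym2 V)) : G.lineGraph.edist e f ≤ 1 := by
  rw [edist_le_one_iff_adj_or_eq, lineGraph_adj_iff_exists]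
  by_cases hef : e = f
  · exact .inr hef
  · exact .inl ⟨hef, u, he, hf⟩

lemma edist_lineGraph_le_length_add_one (p : G.Walk u v) {e f : G.edgeSet}
    (hu : u ∈ (e : Sym2 V)) (hv : v ∈ (f : Sym2 V)) :
    G.lineGraph.edist e f ≤ p.length + 1 := by
  induction p generalizing e with
  | nil => simpa using edist_lineGraph_le_one hu hv
  | @cons u w v h p ih =>
    let uw : G.edgeSet := ⟨s(u, w), h⟩
    calc G.lineGraph.edist e f
        ≤ G.lineGraph.edist e uw + G.lineGraph.edist uw f := SimpleGraph.edist_triangle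
      _ ≤ 1 + (p.length + 1) := add_le_add (edist_lineGraph_le_one hu (Sym2.mem_mk_left u w))
          (ih (e := uw) (Sym2.mem_mk_right u w) hv)
      _ = (p.cons h).length + 1 := by push_cast [Walk.length_cons]; ring

lemma Connected.exists_dist_le_length_lineGraph (hG : G.Connected) {e f : G.edgeSet}
    (w : G.lineGraph.Walk e f) (hu : u ∈ (e : Sym2 V)) :
    ∃ v ∈ (f : Sym2 V), G.dist u v ≤ w.length := by
  induction w generalizing u with
  | nil => exact ⟨u, hu, by simp⟩
  | @cons e e' f h w ih =>
    obtain ⟨-, z, hze, hze'⟩ := lineGraph_adj_iff_exists.mp h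
    obtain ⟨v, hv, hzv⟩ := ih hze'
    refine ⟨v, hv, ?_⟩
    have := hG.dist_triangle (u := u) (v := z) (w := v)
    have := dist_le_one_of_mem_edgeSet e.2 hu hze
    rw [Walk.length_cons]
    omega

theorem Connected.dist_lineGraph (hG : G.Connected) {e f : G.edgeSet} (hne : e ≠ f) :
    G.lineGraph.dist e f = G.endpointDist e f + 1 := by
  obtain ⟨u, hu, v, hv, huv⟩ := G.exists_dist_eq_endpointDist e f
  obtain ⟨p, hp⟩ := hG.exists_walk_length_eq_dist u v
  have hle := edist_lineGraph_le_length_add_one p hu hv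
  have hreach : G.lineGraph.Reachable e f :=
    reachable_of_edist_ne_top (ne_top_of_le_ne_top (by simp) hle)
  obtain ⟨w, hw⟩ := hreach.exists_walk_length_eq_dist
  refine le_antisymm ?_ ?_
  · rw [← hreach.coe_dist_eq_edist, hp, huv] at hle
    exact_mod_cast hle
  · cases w with
    | nil => exact absurd rfl hne
    | cons h w =>
      obtain ⟨-, z, hz, hz'⟩ := lineGraph_adj_iff_exists.mp h
      obtain ⟨b, hb, hzb⟩ := hG.exists_dist_le_length_lineGraph w hz'
      have := endpointDist_le_dist (G := G) hz hb
      rw [← hw, Walk.length_cons]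
      omega

lemma reachable_deleteEdges_or (h : G.Reachable u x) (y : V) :
    (G.deleteEdges {s(x, y)}).Reachable u x ∨ (G.deleteEdges {s(x, y)}).Reachable u y := by
  obtain ⟨p⟩ := h
  induction p with
  | nil => exact .inl .rfl
  | @cons u w x h p ih =>
    by_cases he : s(u, w) = s(x, y)
    · obtain ⟨rfl, -⟩ | ⟨rfl, -⟩ := Sym2.eq_iff.mp he
      · exact .inl .rfl
      · exact .inr .rfl
    · have huw : (G.deleteEdges {s(x, y)}).Reachable u w :=
        (deleteEdges_adj.mpr ⟨h, he⟩).reachable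
      exact ih.imp huw.trans huw.trans

theorem Connected.reachable_deleteEdges_of_dist_le (hG : G.Connected) (he : e ∈ G.edgeSet)
    (ha : a ∈ e) (hu : u ∈ e) (hdist : G.dist u v ≤ G.dist a v)
    (huv : ¬ (G.deleteEdges {g}).Reachable u v) : (G.deleteEdges {g}).Reachable a u := by
  classical
  obtain rfl | hau := eq_or_ne a u
  · rfl
  by_cases hg : g = s(a, u)
  · -- then `a` lies on a shortest walk from `u` to `v`, so it is strictly closer to `v`
    subst hg
    obtain ⟨p, hp⟩ := hG.exists_walk_length_eq_dist u v
    have ha' := p.fst_mem_support_of_mem_edges (p.mem_edges_of_not_reachable_deleteEdges huv)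
    have := p.length_dropUntil_lt_length ha' hau
    have := dist_le (p.dropUntil a ha')
    omega
  · have hadj : G.Adj a u := adj_iff_exists_edge.mpr ⟨hau, e, he, ha, hu⟩
    exact (deleteEdges_adj.mpr ⟨hadj, by simpa [eq_comm] using hg⟩).reachable

section Side

variable [Fintype V]

open Classical in
noncomputable def side (G : SimpleGraph V) (x y : V) : Finset V :=
  {u | (G.deleteEdges {s(x, y)}).Reachable u x}

lemma mem_side : u ∈ G.side x y ↔ (G.deleteEdges {s(x, y)}).Reachable u x := by
  simp [side]

theorem Connected.reachable_deleteEdges_iff (hG : G.Connected) :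
    (G.deleteEdges {s(x, y)}).Reachable u v ↔ (u ∈ G.side x y ↔ v ∈ G.side x y) := by
  simp only [mem_side]
  refine ⟨fun h ↦ ⟨h.symm.trans, h.trans⟩, fun h ↦ ?_⟩
  by_cases hu : (G.deleteEdges {s(x, y)}).Reachable u x
  · exact hu.trans (h.mp hu).symm
  · have hu' := (reachable_deleteEdges_or (hG u x) y).resolve_left hu
    have hv' := (reachable_deleteEdges_or (hG v x) y).resolve_left (mt h.mpr hu)
    exact hu'.trans hv'.symm

theorem IsTree.right_notMem_side (hG : G.IsTree) (hxy : G.Adj x y) : y ∉ G.side x y := by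
  rw [mem_side]
  exact fun h ↦ isBridge_iff.mp (isAcyclic_iff_forall_adj_isBridge.mp hG.isAcyclic hxy) h.symm

theorem IsTree.isTree_induce_side (hG : G.IsTree) (hxy : G.Adj x y) :
    (G.induce (G.side x y : Set V)).IsTree := by
  set H := G.deleteEdges {s(x, y)}
  have hsupp : (H.connectedComponentMk x).supp = G.side x y := by
    ext u
    simp [ConnectedComponent.mem_supp_iff, mem_side, H]
  have hind : G.induce (G.side x y : Set V) = H.induce (G.side x y) := by
    ext ⟨u, hu⟩ ⟨v, hv⟩
    simp only [comap_adj, Function.Embedding.coe_subtype, H, deleteEdges_adj,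
      Set.mem_singleton_iff, iff_self_and]
    intro _ huv
    have hy : y ∈ s(u, v) := huv ▸ Sym2.mem_mk_right x y
    rcases Sym2.mem_iff.mp hy with rfl | rfl <;> exact hG.right_notMem_side hxy ‹_›
  rw [hind, ← hsupp]
  exact (hG.isAcyclic.anti (deleteEdges_le _)).isTree_connectedComponent _

variable [DecidableEq V]

theorem IsTree.compl_side (hG : G.IsTree) (hxy : G.Adj x y) : (G.side x y)ᶜ = G.side y x := by
  have hy := hG.right_notMem_side hxy
  ext u
  rw [mem_compl, mem_side (x := y), Sym2.eq_swap, hG.connected.reachable_deleteEdges_iff]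
  tauto

theorem IsTree.disjoint_side (hG : G.IsTree) (hxy : G.Adj x y) :
    Disjoint (G.side x y) (G.side y x) := by
  rw [← hG.compl_side hxy]
  exact disjoint_compl_right

theorem IsTree.not_reachable_deleteEdges_iff (hG : G.IsTree) (hxy : G.Adj x y) :
    ¬ (G.deleteEdges {s(x, y)}).Reachable u v ↔
      u ∈ G.side x y ∧ v ∈ G.side y x ∨ u ∈ G.side y x ∧ v ∈ G.side x y := by
  rw [← hG.compl_side hxy, hG.connected.reachable_deleteEdges_iff, mem_compl, mem_compl]
  tauto

end Side

section Counting

variable [Fintype V] [DecidableEq V] [DecidableRel G.Adj]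

theorem IsTree.dist_eq_card_filter_not_reachable (hG : G.IsTree) (u v : V) :
    G.dist u v = #{g ∈ G.edgeFinset | ¬ (G.deleteEdges {g}).Reachable u v} := by
  obtain ⟨p, hp, hlen⟩ := hG.connected.exists_path_of_dist u v
  suffices {g ∈ G.edgeFinset | ¬ (G.deleteEdges {g}).Reachable u v} = p.edges.toFinset by
    rw [this, List.toFinset_card_of_nodup hp.isTrail.edges_nodup, Walk.length_edges, hlen]
  ext g
  simp only [mem_filter, mem_edgeFinset, List.mem_toFinset]
  refine ⟨fun h ↦ p.mem_edges_of_not_reachable_deleteEdges h.2,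
    fun hg ↦ ⟨p.edges_subset_edgeSet hg, fun ⟨q⟩ ↦ ?_⟩⟩
  have hq : (q.bypass.mapLe (deleteEdges_le _)).IsPath := q.bypass_isPath.mapLe _
  rw [(hG.existsUnique_path u v).unique hp hq, Walk.edges_mapLe_eq_edges] at hg
  simpa [edgeSet_deleteEdges] using q.bypass.edges_subset_edgeSet hg

theorem IsTree.endpointDist_eq_card_filter (hG : G.IsTree) (he : e ∈ G.edgeSet)
    (hf : f ∈ G.edgeSet) : G.endpointDist e f =
      #{g ∈ G.edgeFinset | ∀ a ∈ e, ∀ b ∈ f, ¬ (G.deleteEdges {g}).Reachable a b} := by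
  obtain ⟨u, hu, v, hv, huv⟩ := G.exists_dist_eq_endpointDist e f
  rw [← huv, hG.dist_eq_card_filter_not_reachable]
  refine congrArg card (filter_congr fun g _ ↦ ⟨fun h a ha b hb hab ↦ h ?_, fun h ↦ h u hu v hv⟩)
  have hau := hG.connected.reachable_deleteEdges_of_dist_le he ha hu
    (huv ▸ endpointDist_le_dist ha hv) h
  have hbv := hG.connected.reachable_deleteEdges_of_dist_le hf hb hv
    (by rw [dist_comm, huv, dist_comm]; exact endpointDist_le_dist hu hb) (h ·.symm)
  exact hau.symm.trans (hab.trans hbv)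

theorem IsTree.card_filter_subset_side_add_one (hG : G.IsTree) (hxy : G.Adj x y) :
    #{e ∈ G.edgeFinset | e.toFinset ⊆ G.side x y} + 1 = #(G.side x y) := by
  rw [card_filter_edgeFinset_toFinset_subset]
  convert (hG.isTree_induce_side hxy).card_edgeFinset
  simp

theorem IsTree.card_filter_not_reachable_deleteEdges (hG : G.IsTree) (hxy : G.Adj x y) :
    #{p : V × V | ¬ (G.deleteEdges {s(x, y)}).Reachable p.1 p.2} =
      2 * #(G.side x y) * #(G.side y x) := by
  rw [← card_filter_mem_and_mem_or_mem_and_mem (subset_univ _) (subset_univ _)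
    (hG.disjoint_side hxy), univ_product_univ]
  simp_rw [hG.not_reachable_deleteEdges_iff hxy]

theorem IsTree.card_filter_forall_not_reachable_deleteEdges (hG : G.IsTree) (hxy : G.Adj x y) :
    #{p ∈ G.edgeFinset ×ˢ G.edgeFinset |
        ∀ a ∈ p.1, ∀ b ∈ p.2, ¬ (G.deleteEdges {s(x, y)}).Reachable a b} =
      2 * #{e ∈ G.edgeFinset | e.toFinset ⊆ G.side x y} *
        #{e ∈ G.edgeFinset | e.toFinset ⊆ G.side y x} := by
  have hdisj : Disjoint {e ∈ G.edgeFinset | e.toFinset ⊆ G.side x y}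
      {e ∈ G.edgeFinset | e.toFinset ⊆ G.side y x} :=
    disjoint_filter.mpr fun e _ hA hB ↦ Finset.disjoint_left.mp (hG.disjoint_side hxy)
      (hA (Sym2.mem_toFinset.mpr e.out_fst_mem)) (hB (Sym2.mem_toFinset.mpr e.out_fst_mem))
  rw [← card_filter_mem_and_mem_or_mem_and_mem (filter_subset _ _) (filter_subset _ _) hdisj]
  refine congrArg card (filter_congr fun p hp ↦ ?_)
  obtain ⟨he, hf⟩ := mem_product.mp hp
  simp only [hG.not_reachable_deleteEdges_iff hxy,
    Sym2.forall_mem_forall_mem_or_iff (hG.disjoint_side hxy), mem_filter, he, hf, true_and]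

theorem IsTree.card_filter_not_reachable_eq_card_filter_forall_not_reachable_add
    (hG : G.IsTree) (hxy : G.Adj x y) :
    #{p : V × V | ¬ (G.deleteEdges {s(x, y)}).Reachable p.1 p.2} =
      #{p ∈ G.edgeFinset ×ˢ G.edgeFinset |
        ∀ a ∈ p.1, ∀ b ∈ p.2, ¬ (G.deleteEdges {s(x, y)}).Reachable a b} + 2 * #G.edgeFinset := by
  have hsides := card_add_card_compl (G.side x y)
  rw [hG.compl_side hxy, ← hG.card_filter_subset_side_add_one hxy,
    ← hG.card_filter_subset_side_add_one hxy.symm] at hsides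
  have hedges : #G.edgeFinset = #{e ∈ G.edgeFinset | e.toFinset ⊆ G.side x y} +
      #{e ∈ G.edgeFinset | e.toFinset ⊆ G.side y x} + 1 := by
    have := hG.card_edgeFinset
    omega
  rw [hG.card_filter_not_reachable_deleteEdges hxy,
    hG.card_filter_forall_not_reachable_deleteEdges hxy,
    ← hG.card_filter_subset_side_add_one hxy, ← hG.card_filter_subset_side_add_one hxy.symm,
    hedges]
  ring

theorem IsTree.sum_dist_eq_sum_endpointDist (hG : G.IsTree) :
    ∑ u, ∑ v, G.dist u v = ∑ e ∈ G.edgeFinset, ∑ f ∈ G.edgeFinset, G.endpointDist e f +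
      2 * #G.edgeFinset * #G.edgeFinset := by
  rw [← Fintype.sum_prod_type', ← sum_product']
  calc ∑ p : V × V, G.dist p.1 p.2
      = ∑ p : V × V, #{g ∈ G.edgeFinset | ¬ (G.deleteEdges {g}).Reachable p.1 p.2} :=
        sum_congr rfl fun p _ ↦ hG.dist_eq_card_filter_not_reachable p.1 p.2
    _ = ∑ g ∈ G.edgeFinset, #{p : V × V | ¬ (G.deleteEdges {g}).Reachable p.1 p.2} :=
        sum_card_bipartiteAbove_eq_sum_card_bipartiteBelow _
    _ = ∑ g ∈ G.edgeFinset, (#{p ∈ G.edgeFinset ×ˢ G.edgeFinset |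
          ∀ a ∈ p.1, ∀ b ∈ p.2, ¬ (G.deleteEdges {g}).Reachable a b} + 2 * #G.edgeFinset) := by
        refine sum_congr rfl fun g hg ↦ ?_
        induction g using Sym2.ind with
        | _ x y =>
          exact hG.card_filter_not_reachable_eq_card_filter_forall_not_reachable_add
            (mem_edgeFinset.mp hg)
    _ = ∑ g ∈ G.edgeFinset, #{p ∈ G.edgeFinset ×ˢ G.edgeFinset |
          ∀ a ∈ p.1, ∀ b ∈ p.2, ¬ (G.deleteEdges {g}).Reachable a b} +
          2 * #G.edgeFinset * #G.edgeFinset := by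
        rw [sum_add_distrib, sum_const, smul_eq_mul]
        ring
    _ = ∑ p ∈ G.edgeFinset ×ˢ G.edgeFinset, #{g ∈ G.edgeFinset |
          ∀ a ∈ p.1, ∀ b ∈ p.2, ¬ (G.deleteEdges {g}).Reachable a b} +
          2 * #G.edgeFinset * #G.edgeFinset :=
        congrArg (· + _) (sum_card_bipartiteAbove_eq_sum_card_bipartiteBelow _).symm
    _ = ∑ p ∈ G.edgeFinset ×ˢ G.edgeFinset, G.endpointDist p.1 p.2 +
          2 * #G.edgeFinset * #G.edgeFinset := by
        refine congrArg (· + _) (sum_congr rfl fun p hp ↦ ?_)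
        obtain ⟨he, hf⟩ := mem_product.mp hp
        exact (hG.endpointDist_eq_card_filter (mem_edgeFinset.mp he) (mem_edgeFinset.mp hf)).symm

theorem Connected.sum_dist_lineGraph_add_card (hG : G.Connected) :
    ∑ e : G.edgeSet, ∑ f : G.edgeSet, G.lineGraph.dist e f + #G.edgeFinset =
      ∑ e ∈ G.edgeFinset, ∑ f ∈ G.edgeFinset, G.endpointDist e f +
        #G.edgeFinset * #G.edgeFinset := by
  have hdist (e f : G.edgeSet) :
      G.lineGraph.dist e f + (if e = f then 1 else 0) = G.endpointDist e f + 1 := by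
    split_ifs with h
    · simp [h, endpointDist_self]
    · rw [hG.dist_lineGraph h, add_zero]
  have hsubtype (F : Sym2 V → ℕ) : ∑ e ∈ G.edgeFinset, F e = ∑ e : G.edgeSet, F e :=
    sum_subtype _ (fun _ ↦ mem_edgeFinset) F
  simp only [hsubtype, ← card_edgeSet]
  calc ∑ e : G.edgeSet, ∑ f : G.edgeSet, G.lineGraph.dist e f + Fintype.card G.edgeSet
      = ∑ e : G.edgeSet, ∑ f : G.edgeSet,
          (G.lineGraph.dist e f + if e = f then 1 else 0) := by
        simp [sum_add_distrib, card_univ]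
    _ = _ := by
        simp [hdist, sum_add_distrib, card_univ]

end Counting

end SimpleGraph

theorem wiener_lineGraph_tree {V : Type*} [Fintype V] [DecidableEq V]
    (T : SimpleGraph V) [DecidableRel T.Adj] (hT : T.IsTree) :
    wienerIndex T.lineGraph =
      wienerIndex T - (Fintype.card V : ℚ) * ((Fintype.card V : ℚ) - 1) / 2 := by
  have hline := congrArg (Nat.cast : ℕ → ℚ) hT.connected.sum_dist_lineGraph_add_card
  have htree := congrArg (Nat.cast : ℕ → ℚ) hT.sum_dist_eq_sum_endpointDist
  have hcard := congrArg (Nat.cast : ℕ → ℚ) hT.card_edgeFinset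
  push_cast at hline htree hcard
  unfold wienerIndex
  linear_combination (hline - htree) / 2 - ((Fintype.card V : ℚ) + T.edgeFinset.card) / 2 * hcard
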